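/- arXiv:2408.06465 — 3 statements merged into one kernel-verified Lean document; each statement's English description precedes it below -/
import Mathlib

section
/- Let H be a reproducing kernel Hilbert space on a set X with reproducing kernel k, let x₁, …, x_N ∈ X with invertible Gram matrix Θ, let y ∈ ℝ^N with y ≠ 0, and let f^b be the minimum-norm interpolant of the full data (xᵢ, yᵢ), i = 1, …, N. Let S ⊆ {1, …, N} with invertible sub-Gram matrix Θ_S = (k(xᵢ,xⱼ))_{i,j∈S}, let y_S = (yᵢ)_{i∈S}, and let f^c be the minimum-norm interpolant of the subset data (xᵢ, yᵢ), i ∈ S. Then the Kernel Flows loss satisfies ρ := ‖f^b − f^c‖²_H / ‖f^b‖²_H = 1 − (y_Sᵀ Θ_S⁻¹ y_S)/(yᵀ Θ⁻¹ y). -/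
open scoped RealInnerProductSpace
open Matrix

/-- **Closed form of the Kernel Flows loss ρ.**  Let `H` be an RKHS on `X` with
reproducing kernel `k`, let `x₁, …, x_N` have invertible Gram matrix `Θ`, let
`y ∈ ℝ^N` with `y ≠ 0`, and let `f^b` be the minimum-norm interpolant of the full data.
Let `S ⊆ {1, …, N}` have invertible sub-Gram matrix `Θ_S` and let `f^c` be the
minimum-norm interpolant of the subset data.  Then
`ρ = ‖f^b − f^c‖² / ‖f^b‖² = 1 − (y_Sᵀ Θ_S⁻¹ y_S)/(yᵀ Θ⁻¹ y)`. -/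
theorem kernel_flows_rho_formula {X H : Type*}
    [NormedAddCommGroup H] [InnerProductSpace ℝ H] [CompleteSpace H]
    (ev : H →ₗ[ℝ] (X → ℝ)) (hev : Function.Injective ev)
    (k : X → X → ℝ) (K : X → H)
    (hK : ∀ x, ev (K x) = k x)
    (hrep : ∀ (f : H) (x : X), ev f x = ⟪f, K x⟫)
    {N : ℕ} (x : Fin N → X) (y : Fin N → ℝ) (hy : y ≠ 0)
    (Θ : Matrix (Fin N) (Fin N) ℝ) (hΘ : ∀ i j, Θ i j = k (x i) (x j))
    [Invertible Θ]
    (S : Finset (Fin N))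
    (ΘS : Matrix S S ℝ) (hΘS : ∀ i j : S, ΘS i j = k (x ↑i) (x ↑j))
    [Invertible ΘS]
    (fb : H) (hfb : ev fb = fun z => ∑ i, ∑ j, y i * Θ⁻¹ i j * k (x j) z)
    (fc : H) (hfc : ev fc = fun z => ∑ i : S, ∑ j : S, y ↑i * ΘS⁻¹ i j * k (x ↑j) z) :
    ‖fb - fc‖ ^ 2 / ‖fb‖ ^ 2 =
      1 - ((fun i : S => y ↑i) ⬝ᵥ ΘS⁻¹ *ᵥ fun i : S => y ↑i) / (y ⬝ᵥ Θ⁻¹ *ᵥ y) := by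
  have hK' : ∀ u z, ev (K u) z = k u z := fun u z => congrFun (hK u) z
  set a : Fin N → ℝ := fun j => ∑ i, y i * Θ⁻¹ i j with ha
  set b : S → ℝ := fun j => ∑ i : S, y ↑i * ΘS⁻¹ i j with hb
  -- fb and fc as linear combinations of kernel sections
  have hfb' : fb = ∑ j, a j • K (x j) := by
    apply hev
    rw [hfb]
    funext z
    simp only [map_sum, _root_.map_smul, Finset.sum_apply, Pi.smul_apply, hK', smul_eq_mul, ha]
    rw [Finset.sum_comm]
    simp [Finset.sum_mul]
  have hfc' : fc = ∑ j : S, b j • K (x ↑j) := by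
    apply hev
    rw [hfc]
    funext z
    simp only [map_sum, _root_.map_smul, Finset.sum_apply, Pi.smul_apply, hK', smul_eq_mul, hb]
    rw [Finset.sum_comm]
    simp [Finset.sum_mul]
  -- interpolation properties
  have hfbx : ∀ m, ev fb (x m) = y m := by
    intro m
    rw [hfb]
    have : ∀ i : Fin N, ∑ j, y i * Θ⁻¹ i j * k (x j) (x m) = y i * (1 : Matrix (Fin N) (Fin N) ℝ) i m := by
      intro i
      rw [← Matrix.inv_mul_of_invertible Θ, Matrix.mul_apply, Finset.mul_sum]
      exact Finset.sum_congr rfl fun j _ => by rw [hΘ, mul_assoc]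
    simp only [this]
    simp [Matrix.one_apply]
  have hfcx : ∀ m : S, ev fc (x ↑m) = y ↑m := by
    intro m
    rw [hfc]
    have : ∀ i : S, ∑ j : S, y ↑i * ΘS⁻¹ i j * k (x ↑j) (x ↑m) = y ↑i * (1 : Matrix S S ℝ) i m := by
      intro i
      rw [← Matrix.inv_mul_of_invertible ΘS, Matrix.mul_apply, Finset.mul_sum]
      exact Finset.sum_congr rfl fun j _ => by rw [hΘS, mul_assoc]
    simp only [this]
    simp [Matrix.one_apply]
  set α : ℝ := y ⬝ᵥ Θ⁻¹ *ᵥ y with hα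
  set β : ℝ := (fun i : S => y ↑i) ⬝ᵥ ΘS⁻¹ *ᵥ fun i : S => y ↑i with hβ
  have hay : ∑ j, a j * y j = α := by
    rw [hα]
    simp only [dotProduct, mulVec, ha, Finset.sum_mul, Finset.mul_sum]
    rw [Finset.sum_comm]
    exact Finset.sum_congr rfl fun j _ => Finset.sum_congr rfl fun i _ => by ring
  have hby : ∑ j : S, b j * y ↑j = β := by
    rw [hβ]
    simp only [dotProduct, mulVec, hb, Finset.sum_mul, Finset.mul_sum]
    rw [Finset.sum_comm]
    exact Finset.sum_congr rfl fun j _ => Finset.sum_congr rfl fun i _ => by ring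
  have hbb : ⟪fb, fb⟫ = α := by
    nth_rewrite 2 [hfb']
    rw [inner_sum]
    calc ∑ j, ⟪fb, a j • K (x j)⟫ = ∑ j, a j * y j := by
          refine Finset.sum_congr rfl fun j _ => ?_
          rw [real_inner_smul_right, ← hrep, hfbx]
      _ = α := hay
  have hbc : ⟪fb, fc⟫ = β := by
    rw [hfc', inner_sum]
    calc ∑ j : S, ⟪fb, b j • K (x ↑j)⟫ = ∑ j : S, b j * y ↑j := by
          refine Finset.sum_congr rfl fun j _ => ?_
          rw [real_inner_smul_right, ← hrep, hfbx]
      _ = β := hby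
  have hcc : ⟪fc, fc⟫ = β := by
    nth_rewrite 2 [hfc']
    rw [inner_sum]
    calc ∑ j : S, ⟪fc, b j • K (x ↑j)⟫ = ∑ j : S, b j * y ↑j := by
          refine Finset.sum_congr rfl fun j _ => ?_
          rw [real_inner_smul_right, ← hrep, hfcx]
      _ = β := hby
  have hfb0 : fb ≠ 0 := by
    intro h
    apply hy
    funext m
    have h2 := hfbx m
    rw [h, map_zero] at h2
    simpa using h2.symm
  have hα0 : α ≠ 0 := by
    rw [← hbb, real_inner_self_eq_norm_sq]
    exact pow_ne_zero 2 (norm_ne_zero_iff.mpr hfb0)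
  have hnb : ‖fb‖ ^ 2 = α := by rw [← real_inner_self_eq_norm_sq, hbb]
  have hnc : ‖fc‖ ^ 2 = β := by rw [← real_inner_self_eq_norm_sq, hcc]
  have hsub : ‖fb - fc‖ ^ 2 = α - β := by
    rw [norm_sub_sq_real, hnb, hnc, hbc]; ring
  rw [hsub, hnb]
  field_simp
end

section
/- Let H be a reproducing kernel Hilbert space on a set X with reproducing kernel k, let x₁, …, x_N ∈ X with invertible Gram matrix Θ, let y ∈ ℝ^N, and let v* be the minimum-norm interpolant of the data (xᵢ, yᵢ). Then for every R ≥ ‖v*‖_H, v* minimizes over all v ∈ H the worst-case recovery error sup{ ‖u − v‖_H : u ∈ H, u(xᵢ) = yᵢ for all i, ‖u‖_H ≤ R }; i.e., v* is a minimax-optimal recovery of an unknown function known only through the data constraints and a norm bound. -/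
open scoped RealInnerProductSpace
open Matrix

/-- **Minimax optimality of the minimum-norm interpolant.**  Let `H` be an RKHS on `X`
with reproducing kernel `k`, let `x₁, …, x_N` have invertible Gram matrix `Θ`, let
`y ∈ ℝ^N` and let `w ∈ H` be the minimum-norm interpolant
`v* z = ∑ i j, yᵢ (Θ⁻¹)ᵢⱼ k (xⱼ) z`.  Then for every `R ≥ ‖w‖` and every `v ∈ H`, the
worst-case recovery error of `w` over the class
`{u ∈ H : u (xᵢ) = yᵢ, ‖u‖ ≤ R}` is at most that of `v`; i.e. `w` is a minimax-optimal
recovery. -/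
theorem minimum_norm_interpolant_minimax_optimal {X H : Type*}
    [NormedAddCommGroup H] [InnerProductSpace ℝ H] [CompleteSpace H]
    (ev : H →ₗ[ℝ] (X → ℝ)) (hev : Function.Injective ev)
    (k : X → X → ℝ) (K : X → H)
    (hK : ∀ x, ev (K x) = k x)
    (hrep : ∀ (f : H) (x : X), ev f x = ⟪f, K x⟫)
    {N : ℕ} (x : Fin N → X) (y : Fin N → ℝ)
    (Θ : Matrix (Fin N) (Fin N) ℝ) (hΘ : ∀ i j, Θ i j = k (x i) (x j))
    [Invertible Θ]
    (w : H) (hw : ev w = fun z => ∑ i, ∑ j, y i * Θ⁻¹ i j * k (x j) z)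
    (R : ℝ) (hR : ‖w‖ ≤ R) :
    ∀ v : H,
      sSup {d : ℝ | ∃ u : H, (∀ i, ev u (x i) = y i) ∧ ‖u‖ ≤ R ∧ d = ‖u - w‖} ≤
        sSup {d : ℝ | ∃ u : H, (∀ i, ev u (x i) = y i) ∧ ‖u‖ ≤ R ∧ d = ‖u - v‖} := by
  intro v
  -- w interpolates the data
  have hwi : ∀ i, ev w (x i) = y i := by
    intro i
    rw [hw]
    have h1 : ∀ i' : Fin N, ∑ j, y i' * Θ⁻¹ i' j * k (x j) (x i)
        = y i' * (Θ⁻¹ * Θ) i' i := by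
      intro i'
      rw [Matrix.mul_apply, Finset.mul_sum]
      refine Finset.sum_congr rfl fun j _ => ?_
      rw [← hΘ, mul_assoc]
    simp only [h1, Matrix.inv_mul_of_invertible, Matrix.one_apply]
    simp
  -- w is in the span of the kernel functions
  set c : Fin N → ℝ := fun j => ∑ i, y i * Θ⁻¹ i j with hc
  have hwK : w = ∑ j, c j • K (x j) := by
    apply hev
    rw [hw, map_sum]
    funext z
    simp only [Finset.sum_apply, LinearMap.map_smul, Pi.smul_apply, hK, smul_eq_mul,
      hc, Finset.sum_mul]
    rw [Finset.sum_comm]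
  -- orthogonality
  have horth : ∀ u : H, (∀ i, ev u (x i) = y i) → ⟪w, u - w⟫ = 0 := by
    intro u hu
    have h : ⟪∑ j, c j • K (x j), u - w⟫ = 0 := by
      rw [sum_inner]
      refine Finset.sum_eq_zero fun j _ => ?_
      rw [real_inner_smul_left, real_inner_comm, ← hrep]
      simp [map_sub, hu j, hwi j]
    rwa [← hwK] at h
  -- reflection preserves norm
  have hrefl : ∀ u : H, (∀ i, ev u (x i) = y i) → ‖w + (w - u)‖ = ‖u‖ := by
    intro u hu
    have h0 : ⟪w, w - u⟫ = 0 := by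
      have := horth u hu
      rw [← neg_sub u w, inner_neg_right, this, neg_zero]
    have hin : ⟪w, u⟫ = ‖w‖ ^ 2 := by
      rw [inner_sub_right, real_inner_self_eq_norm_sq] at h0
      linarith
    have h1 : ‖w + (w - u)‖ ^ 2 = ‖u‖ ^ 2 := by
      rw [norm_add_sq_real, h0, norm_sub_sq_real, hin]
      ring
    have := congrArg Real.sqrt h1
    rwa [Real.sqrt_sq (norm_nonneg _), Real.sqrt_sq (norm_nonneg _)] at this
  -- bounded above
  have hbdd : BddAbove {d : ℝ | ∃ u : H, (∀ i, ev u (x i) = y i) ∧ ‖u‖ ≤ R ∧ d = ‖u - v‖} := by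
    refine ⟨R + ‖v‖, ?_⟩
    rintro d ⟨u, -, hun, rfl⟩
    calc ‖u - v‖ ≤ ‖u‖ + ‖v‖ := norm_sub_le _ _
      _ ≤ R + ‖v‖ := by linarith
  have hwmem : ‖w - v‖ ∈ {d : ℝ | ∃ u : H, (∀ i, ev u (x i) = y i) ∧ ‖u‖ ≤ R ∧ d = ‖u - v‖} :=
    ⟨w, hwi, hR, rfl⟩
  have hS0 : (0:ℝ) ≤ sSup {d : ℝ | ∃ u : H, (∀ i, ev u (x i) = y i) ∧ ‖u‖ ≤ R ∧ d = ‖u - v‖} :=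
    le_trans (norm_nonneg _) (le_csSup hbdd hwmem)
  refine Real.sSup_le ?_ hS0
  rintro d ⟨u, hu, hun, rfl⟩
  set S := sSup {d : ℝ | ∃ u : H, (∀ i, ev u (x i) = y i) ∧ ‖u‖ ≤ R ∧ d = ‖u - v‖} with hSdef
  have h1 : ‖u - v‖ ≤ S := le_csSup hbdd ⟨u, hu, hun, rfl⟩
  have hu' : ∀ i, ev (w + (w - u)) (x i) = y i := by
    intro i
    simp [map_add, map_sub, hwi i, hu i]
  have hun' : ‖w + (w - u)‖ ≤ R := by rw [hrefl u hu]; exact hun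
  have h2 : ‖w + (w - u) - v‖ ≤ S := le_csSup hbdd ⟨w + (w - u), hu', hun', rfl⟩
  have h3 : (2:ℝ) * ‖u - w‖ ≤ ‖u - v‖ + ‖w + (w - u) - v‖ := by
    have : ‖(u - v) - (w + (w - u) - v)‖ ≤ ‖u - v‖ + ‖w + (w - u) - v‖ := norm_sub_le _ _
    have heq : (u - v) - (w + (w - u) - v) = (2:ℝ) • (u - w) := by
      rw [two_smul]; abel
    rw [heq, norm_smul] at this
    simpa using this
  linarith
end

section
/- Let Φ₁, …, Φ_n ∈ ℝ^n be linearly independent vectors and let r₁, …, r_n ∈ ℝ. Consider the optimization problem sup{ c : c ∈ ℝ, B ∈ ℝ^{n×n} symmetric positive semidefinite, rᵢ − c = Φᵢᵀ B Φᵢ for all 1 ≤ i ≤ n }. Then the supremum is attained and equals min_{1 ≤ i ≤ n} rᵢ; in particular, with zero trace regularization (λ = 0), the kernel sum-of-squares relaxation returns the lowest sampled function value. -/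
/-!
If `Φ` stacks into an invertible matrix `M`, then `Φ i ⬝ᵥ B *ᵥ Φ i` is the `i`-th diagonal
entry of `M * B * Mᵀ`, so `B := M⁻¹ * diagonal d * M⁻¹ᵀ` (positive semidefinite for `d ≥ 0`)
realises any nonnegative values `d i`; with `d i = r i - min r` this shows that `min r` is
feasible. Conversely `r i - c` is a PSD quadratic form, hence `c ≤ r i` for every `i`.
-/

open Matrix

section

variable {ι : Type*} [Fintype ι]

theorem le_of_sub_eq_dotProduct_mulVec {B : Matrix ι ι ℝ} (hB : B.PosSemidef) {x : ι → ℝ}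
    {r c : ℝ} (h : r - c = x ⬝ᵥ B *ᵥ x) : c ≤ r := by
  have hform := hB.dotProduct_mulVec_nonneg x
  rw [star_trivial] at hform
  linarith

variable [DecidableEq ι]

theorem exists_posSemidef_dotProduct_mulVec_eq {Φ : ι → ι → ℝ} (hΦ : LinearIndependent ℝ Φ)
    {d : ι → ℝ} (hd : 0 ≤ d) :
    ∃ B : Matrix ι ι ℝ, B.PosSemidef ∧ ∀ i, Φ i ⬝ᵥ B *ᵥ Φ i = d i := by
  let M : Matrix ι ι ℝ := of Φ
  have : Invertible M := (linearIndependent_rows_iff_isUnit.mp hΦ).invertible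
  refine ⟨M⁻¹ * diagonal d * M⁻¹ᵀ, ?_, fun i => ?_⟩
  · simpa only [conjTranspose_eq_transpose_of_trivial] using
      (posSemidef_diagonal_iff.mpr hd).mul_mul_conjTranspose_same M⁻¹
  · have hdiag : M * (M⁻¹ * diagonal d * M⁻¹ᵀ) * Mᵀ = diagonal d := by
      simp only [← Matrix.mul_assoc, mul_inv_of_invertible, Matrix.one_mul]
      rw [Matrix.mul_assoc, ← transpose_mul, mul_inv_of_invertible, transpose_one,
        Matrix.mul_one]
    have hentry := congrFun₂ hdiag i i
    rwa [mul_mul_apply, transpose_transpose, diagonal_apply_eq] at hentry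

end

/-- **KSOS with zero regularization returns the lowest sampled value.**  Let
`Φ₁, …, Φ_n ∈ ℝ^n` be linearly independent and `r₁, …, r_n ∈ ℝ`.  Then the supremum of
`{c : ∃ B symmetric PSD, rᵢ − c = Φᵢᵀ B Φᵢ for all i}` is attained and equals
`min_i rᵢ`. -/
theorem ksos_zero_regularization_eq_min {n : ℕ} (hn : 0 < n)
    (Φ : Fin n → (Fin n → ℝ)) (hΦ : LinearIndependent ℝ Φ) (r : Fin n → ℝ) :
    IsGreatest
      {c : ℝ | ∃ B : Matrix (Fin n) (Fin n) ℝ, B.PosSemidef ∧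
        ∀ i, r i - c = Φ i ⬝ᵥ B *ᵥ Φ i}
      (⨅ i, r i) := by
  have : Nonempty (Fin n) := ⟨⟨0, hn⟩⟩
  refine ⟨?_, fun c ⟨B, hB, hc⟩ => le_ciInf fun i => le_of_sub_eq_dotProduct_mulVec hB (hc i)⟩
  have hgap : 0 ≤ fun i => r i - ⨅ j, r j := fun i =>
    sub_nonneg.mpr (ciInf_le (Set.finite_range r).bddBelow i)
  obtain ⟨B, hB, hBΦ⟩ := exists_posSemidef_dotProduct_mulVec_eq hΦ hgap
  exact ⟨B, hB, fun i => (hBΦ i).symm⟩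
end
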